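/- arXiv:2408.11267 — 3 statements merged into one kernel-verified Lean document; each statement's English description precedes it below -/
import Mathlib

section
/- For every j ∈ [d], the map x ↦ (A_xᵀ A_x)^{-1} is partially differentiable in x_j with ∂((A_xᵀ A_x)^{-1})/∂x_j = 2 (A_xᵀ A_x)^{-1} A_xᵀ diag(A_{x,*,j}) A_x (A_xᵀ A_x)^{-1}. -/
open Matrix

/-- `s_x := A x - b`. -/
noncomputable def sVec {n d : ℕ} (A : Matrix (Fin n) (Fin d) ℝ) (b : Fin n → ℝ)
    (x : Fin d → ℝ) : Fin n → ℝ := A.mulVec x - b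

/-- `A_x := S_x⁻¹ A` where `S_x := diag(s_x)`. -/
noncomputable def matAx {n d : ℕ} (A : Matrix (Fin n) (Fin d) ℝ) (b : Fin n → ℝ)
    (x : Fin d → ℝ) : Matrix (Fin n) (Fin d) ℝ := (Matrix.diagonal (sVec A b x))⁻¹ * A

lemma ringInverse_pi {n : ℕ} (v : Fin n → ℝ) (hv : ∀ i, v i ≠ 0) :
    Ring.inverse v = fun i => (v i)⁻¹ := by
  have hmul : v * (fun i => (v i)⁻¹) = 1 := by
    funext i
    exact mul_inv_cancel₀ (hv i)
  have hu : IsUnit v := IsUnit.of_mul_eq_one _ hmul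
  rw [← hu.unit_spec, Ring.inverse_unit]
  exact hu.unit.inv_eq_of_mul_eq_one_right (by rw [hu.unit_spec]; exact hmul)

lemma matAx_apply {n d : ℕ} (A : Matrix (Fin n) (Fin d) ℝ) (b : Fin n → ℝ)
    (y : Fin d → ℝ) (hy : ∀ i, sVec A b y i ≠ 0) (i : Fin n) (m : Fin d) :
    matAx A b y i m = (sVec A b y i)⁻¹ * A i m := by
  rw [matAx, Matrix.inv_diagonal, ringInverse_pi _ hy, Matrix.diagonal_mul]

lemma sVec_update {n d : ℕ} (A : Matrix (Fin n) (Fin d) ℝ) (b : Fin n → ℝ)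
    (x : Fin d → ℝ) (j : Fin d) (t : ℝ) (i : Fin n) :
    sVec A b (Function.update x j t) i = sVec A b x i + A i j * (t - x j) := by
  classical
  have h : Function.update x j t = x + Pi.single j (t - x j) := by
    funext m
    by_cases hm : m = j
    · subst hm; simp
    · simp [Function.update_apply, Pi.single_apply, hm]
  simp only [sVec, h, Matrix.mulVec_add, Matrix.mulVec_single]
  simp [sVec]
  ring

/-- For every `j ∈ [d]`, assuming `A_x` has full column rank (so `A_xᵀ A_x` is invertible),
the map `x ↦ (A_xᵀ A_x)⁻¹` is partially differentiable in `x_j` with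
`∂((A_xᵀ A_x)⁻¹)/∂x_j = 2 (A_xᵀ A_x)⁻¹ A_xᵀ diag(A_{x,*,j}) A_x (A_xᵀ A_x)⁻¹`
(stated entrywise). -/
theorem stmt4 {n d : ℕ} (hn : 0 < n) (hd : 0 < d)
    (A : Matrix (Fin n) (Fin d) ℝ) (b : Fin n → ℝ) (x : Fin d → ℝ)
    (hs : ∀ i, sVec A b x i ≠ 0)
    (hrank : IsUnit ((matAx A b x)ᵀ * matAx A b x).det) (j : Fin d) :
    ∀ k l, HasDerivAt
      (fun t : ℝ =>
        (((matAx A b (Function.update x j t))ᵀ * matAx A b (Function.update x j t))⁻¹) k l)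
      (((2 : ℝ) • (((matAx A b x)ᵀ * matAx A b x)⁻¹ * (matAx A b x)ᵀ *
          Matrix.diagonal (fun i => matAx A b x i j) * matAx A b x *
          ((matAx A b x)ᵀ * matAx A b x)⁻¹)) k l)
      (x j) := by
  classical
  intro k l
  set t0 := x j with ht0
  set g := matAx A b x with hg
  have hupdate : Function.update x j t0 = x := Function.update_eq_self j x
  -- eventually all entries of sVec are nonzero
  have hEv : ∀ᶠ t in nhds t0, ∀ i, sVec A b (Function.update x j t) i ≠ 0 := by
    rw [Filter.eventually_all]
    intro i
    have hc : Continuous fun t : ℝ => sVec A b x i + A i j * (t - t0) := by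
      continuity
    have h0 : sVec A b x i + A i j * (t0 - t0) ≠ 0 := by simpa using hs i
    filter_upwards [hc.continuousAt.eventually_ne h0] with t ht
    rw [sVec_update]; exact ht
  -- entrywise derivative of matAx
  have hGentry : ∀ (i : Fin n) (m : Fin d),
      HasDerivAt (fun t => matAx A b (Function.update x j t) i m)
        (-(g i j * g i m)) t0 := by
    intro i m
    have hinner : HasDerivAt (fun t : ℝ => sVec A b x i + A i j * (t - t0)) (A i j) t0 := by
      simpa using (((hasDerivAt_id t0).sub_const t0).const_mul (A i j)).const_add
        (sVec A b x i)
    have hval : sVec A b x i + A i j * (t0 - t0) ≠ 0 := by simpa using hs i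
    have h1 : HasDerivAt (fun t : ℝ => (sVec A b x i + A i j * (t - t0))⁻¹ * A i m)
        (-(A i j) / (sVec A b x i + A i j * (t0 - t0)) ^ 2 * A i m) t0 :=
      (hinner.inv hval).mul_const _
    have heq : (fun t => matAx A b (Function.update x j t) i m)
        =ᶠ[nhds t0] fun t => (sVec A b x i + A i j * (t - t0))⁻¹ * A i m := by
      filter_upwards [hEv] with t ht
      rw [matAx_apply A b _ ht, sVec_update]
    have h2 := h1.congr_of_eventuallyEq heq
    have hv : -(A i j) / (sVec A b x i + A i j * (t0 - t0)) ^ 2 * A i m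
        = -(g i j * g i m) := by
      rw [hg, matAx_apply A b x hs, matAx_apply A b x hs]
      field_simp
      ring
    rwa [hv] at h2
  -- matrix-valued derivative of M(t) = G(t)ᵀ * G(t)
  set Mfun : ℝ → Matrix (Fin d) (Fin d) ℝ :=
    fun t => (matAx A b (Function.update x j t))ᵀ * matAx A b (Function.update x j t)
    with hMfun
  set M' : Matrix (Fin d) (Fin d) ℝ :=
    (-2 : ℝ) • (gᵀ * Matrix.diagonal (fun i => g i j) * g) with hM'
  have hMentry : ∀ p q : Fin d, HasDerivAt (fun t => Mfun t p q) (M' p q) t0 := by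
    intro p q
    have hrw : ∀ t, Mfun t p q
        = ∑ i, matAx A b (Function.update x j t) i p * matAx A b (Function.update x j t) i q := by
      intro t
      simp [hMfun, Matrix.mul_apply, Matrix.transpose_apply]
    have hM'pq : M' p q
        = ∑ i, (-(g i j * g i p) * g i q + g i p * -(g i j * g i q)) := by
      rw [hM', Matrix.smul_apply, Matrix.mul_apply]
      simp only [Matrix.mul_diagonal, Matrix.transpose_apply]
      rw [Finset.smul_sum]
      apply Finset.sum_congr rfl
      intro i _
      simp only [smul_eq_mul]
      ring
    simp only [hrw, hM'pq]
    apply HasDerivAt.fun_sum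
    intro i _
    have h := (hGentry i p).fun_mul (hGentry i q)
    simpa [hupdate, ← hg] using h
  -- set up normed ring structure on matrices
  letI instNG : NormedAddCommGroup (Matrix (Fin d) (Fin d) ℝ) :=
    Matrix.linftyOpNormedAddCommGroup
  letI instNR : NormedRing (Matrix (Fin d) (Fin d) ℝ) := Matrix.linftyOpNormedRing
  letI instNA : NormedAlgebra ℝ (Matrix (Fin d) (Fin d) ℝ) := Matrix.linftyOpNormedAlgebra
  haveI : CompleteSpace (Matrix (Fin d) (Fin d) ℝ) := FiniteDimensional.complete ℝ _
  have hM : HasDerivAt Mfun M' t0 := by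
    have hfun : Mfun = fun t => ∑ p : Fin d, ∑ q : Fin d,
        Matrix.single p q (Mfun t p q) := by
      funext t
      exact Matrix.matrix_eq_sum_single (Mfun t)
    have hM'rw : M' = ∑ p : Fin d, ∑ q : Fin d, Matrix.single p q (M' p q) :=
      Matrix.matrix_eq_sum_single M'
    rw [hM'rw]
    rw [hfun]
    apply HasDerivAt.fun_sum
    intro p _
    apply HasDerivAt.fun_sum
    intro q _
    have hsb : ∀ c : ℝ, Matrix.single p q c = c • Matrix.single p q (1 : ℝ) := by
      intro c
      rw [Matrix.smul_single, smul_eq_mul, mul_one]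
    have h5 := (hMentry p q).smul_const (Matrix.single p q (1 : ℝ))
    have e1 : (fun t => Mfun t p q • Matrix.single p q (1 : ℝ))
        = fun t => Matrix.single p q (Mfun t p q) := funext fun t => (hsb _).symm
    rw [e1, ← hsb] at h5
    exact h5
  -- M(t0) is a unit
  have hMt0 : Mfun t0 = gᵀ * g := by
    show (matAx A b (Function.update x j t0))ᵀ * matAx A b (Function.update x j t0) = gᵀ * g
    rw [hupdate, hg]
  have hu : IsUnit (Mfun t0) := by
    rw [hMt0]
    exact (Matrix.isUnit_iff_isUnit_det _).mpr hrank
  -- derivative of Ring.inverse ∘ Mfun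
  have hinv : HasDerivAt (fun t => Ring.inverse (Mfun t))
      (-((gᵀ * g)⁻¹ * M' * (gᵀ * g)⁻¹)) t0 := by
    have h1 := hasFDerivAt_ringInverse (𝕜 := ℝ) hu.unit
    rw [hu.unit_spec] at h1
    have h3 := h1.comp_hasDerivAt t0 hM
    have hcoe : ((hu.unit⁻¹ : (Matrix (Fin d) (Fin d) ℝ)ˣ) : Matrix (Fin d) (Fin d) ℝ)
        = (gᵀ * g)⁻¹ := by
      rw [Matrix.coe_units_inv, hu.unit_spec, hMt0]
    simp only [ContinuousLinearMap.mulLeftRight_apply, hcoe, Function.comp_def] at h3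
    exact h3
  -- rewrite Ring.inverse as ⁻¹
  have hinv' : HasDerivAt (fun t => (Mfun t)⁻¹)
      (-((gᵀ * g)⁻¹ * M' * (gᵀ * g)⁻¹)) t0 := by
    have : (fun t => (Mfun t)⁻¹) = fun t => Ring.inverse (Mfun t) := by
      funext t
      exact Matrix.nonsing_inv_eq_ringInverse _
    rw [this]
    exact hinv
  -- project to entry (k, l)
  let E : Matrix (Fin d) (Fin d) ℝ →ₗ[ℝ] ℝ :=
    { toFun := fun M => M k l, map_add' := fun _ _ => rfl, map_smul' := fun _ _ => rfl }
  have h4 := (LinearMap.toContinuousLinearMap E).hasFDerivAt.comp_hasDerivAt t0 hinv'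
  have hmat : -((gᵀ * g)⁻¹ * M' * (gᵀ * g)⁻¹)
      = (2 : ℝ) • ((gᵀ * g)⁻¹ * gᵀ * Matrix.diagonal (fun i => g i j) * g * (gᵀ * g)⁻¹) := by
    rw [hM']
    rw [Matrix.mul_smul, Matrix.smul_mul, ← neg_smul, neg_neg]
    -- (associativity cleanup below)
    simp [Matrix.mul_assoc]
  rw [hmat] at h4
  exact h4
end

section
/- For every i ∈ [n] and j ∈ [d], the map x ↦ σ_{i,i}(x) is partially differentiable in x_j with ∂σ_{i,i}(x)/∂x_j = 2 σ_{*,i}(x)ᵀ diag(A_{x,*,j}) σ_{*,i}(x) − 2 A_{x,i,j} · σ_{i,i}(x). -/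
open Matrix

/-- The leverage-score matrix `σ_{*,*}(x) := A_x (A_xᵀ A_x)⁻¹ A_xᵀ`. -/
noncomputable def sigM {n d : ℕ} (A : Matrix (Fin n) (Fin d) ℝ) (b : Fin n → ℝ)
    (x : Fin d → ℝ) : Matrix (Fin n) (Fin n) ℝ :=
  matAx A b x * ((matAx A b x)ᵀ * matAx A b x)⁻¹ * (matAx A b x)ᵀ

section Aux

attribute [local instance] Matrix.linftyOpNormedAddCommGroup Matrix.linftyOpNormedSpace
  Matrix.linftyOpNormedRing Matrix.linftyOpNormedAlgebra

/-- Matrix multiplication as a continuous bilinear map (w.r.t. the `L∞`-operator norm). -/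
noncomputable def mulCLM {m p q : Type*} [Fintype m] [Fintype p] [Fintype q] :
    Matrix m p ℝ →L[ℝ] Matrix p q ℝ →L[ℝ] Matrix m q ℝ :=
  LinearMap.mkContinuous₂
    { toFun := fun M =>
        { toFun := fun N => M * N
          map_add' := fun N₁ N₂ => Matrix.mul_add M N₁ N₂
          map_smul' := fun c N => Matrix.mul_smul M c N }
      map_add' := fun M₁ M₂ => LinearMap.ext fun N => Matrix.add_mul M₁ M₂ N
      map_smul' := fun c M => LinearMap.ext fun N => Matrix.smul_mul c M N }
    1 (fun M N => by simpa using Matrix.linfty_opNorm_mul M N)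

@[simp] theorem mulCLM_apply {m p q : Type*} [Fintype m] [Fintype p] [Fintype q]
    (M : Matrix m p ℝ) (N : Matrix p q ℝ) : mulCLM M N = M * N := rfl

theorem HasDerivAt.matmul {m p q : Type*} [Fintype m] [Fintype p] [Fintype q]
    {f : ℝ → Matrix m p ℝ} {g : ℝ → Matrix p q ℝ} {f' : Matrix m p ℝ} {g' : Matrix p q ℝ}
    {t : ℝ} (hf : HasDerivAt f f' t) (hg : HasDerivAt g g' t) :
    HasDerivAt (fun s => f s * g s) (f' * g t + f t * g') t := by
  have h := ((mulCLM (m := m) (p := p) (q := q)).isBoundedBilinearMap.hasFDerivAt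
    (f t, g t)).comp_hasDerivAt t (hf.prodMk hg)
  simp [IsBoundedBilinearMap.deriv_apply, add_comm] at h; exact h

/-- Transpose as a continuous linear map. -/
noncomputable def transCLM {m p : Type*} [Fintype m] [Fintype p] :
    Matrix m p ℝ →L[ℝ] Matrix p m ℝ :=
  LinearMap.toContinuousLinearMap
    { toFun := fun M => Mᵀ
      map_add' := fun _ _ => Matrix.transpose_add _ _
      map_smul' := fun _ _ => Matrix.transpose_smul _ _ }

@[simp] theorem transCLM_apply {m p : Type*} [Fintype m] [Fintype p] (M : Matrix m p ℝ) :
    transCLM M = Mᵀ := rfl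

theorem HasDerivAt.mattrans {m p : Type*} [Fintype m] [Fintype p]
    {f : ℝ → Matrix m p ℝ} {f' : Matrix m p ℝ} {t : ℝ} (hf : HasDerivAt f f' t) :
    HasDerivAt (fun s => (f s)ᵀ) f'ᵀ t := by
  exact (transCLM (m := m) (p := p)).hasFDerivAt.comp_hasDerivAt t hf

/-- Entry evaluation as a continuous linear map. -/
noncomputable def entryCLM {m p : Type*} [Fintype m] [Fintype p] (i : m) (k : p) :
    Matrix m p ℝ →L[ℝ] ℝ :=
  LinearMap.toContinuousLinearMap
    { toFun := fun M => M i k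
      map_add' := fun _ _ => rfl
      map_smul' := fun _ _ => rfl }

@[simp] theorem entryCLM_apply {m p : Type*} [Fintype m] [Fintype p] (i : m) (k : p)
    (M : Matrix m p ℝ) : entryCLM i k M = M i k := rfl

theorem HasDerivAt.matentry {m p : Type*} [Fintype m] [Fintype p]
    {f : ℝ → Matrix m p ℝ} {f' : Matrix m p ℝ} {t : ℝ} (hf : HasDerivAt f f' t)
    (i : m) (k : p) :
    HasDerivAt (fun s => f s i k) (f' i k) t := by
  exact (entryCLM (m := m) (p := p) i k).hasFDerivAt.comp_hasDerivAt t hf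

/-- `diagonal` as a continuous linear map. -/
noncomputable def diagCLM {m : Type*} [Fintype m] [DecidableEq m] :
    (m → ℝ) →L[ℝ] Matrix m m ℝ :=
  LinearMap.toContinuousLinearMap
    { toFun := Matrix.diagonal
      map_add' := fun a c => (Matrix.diagonal_add a c).symm
      map_smul' := fun r v => Matrix.diagonal_smul r v }

@[simp] theorem diagCLM_apply {m : Type*} [Fintype m] [DecidableEq m] (v : m → ℝ) :
    diagCLM v = Matrix.diagonal v := rfl

theorem HasDerivAt.matdiag {m : Type*} [Fintype m] [DecidableEq m]
    {f : ℝ → (m → ℝ)} {f' : m → ℝ} {t : ℝ} (hf : HasDerivAt f f' t) :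
    HasDerivAt (fun s => Matrix.diagonal (f s)) (Matrix.diagonal f') t := by
  exact (diagCLM (m := m)).hasFDerivAt.comp_hasDerivAt t hf

theorem HasDerivAt.matRingInverse {p : Type*} [Fintype p] [DecidableEq p]
    {G : ℝ → Matrix p p ℝ} {G' : Matrix p p ℝ} {t : ℝ}
    (hG : HasDerivAt G G' t) (hu : IsUnit (G t)) :
    HasDerivAt (fun s => Ring.inverse (G s))
      (-(Ring.inverse (G t) * G' * Ring.inverse (G t))) t := by
  obtain ⟨u, hu⟩ := hu
  have h1 : HasFDerivAt Ring.inverse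
      (-(ContinuousLinearMap.mulLeftRight ℝ (Matrix p p ℝ) ↑u⁻¹ ↑u⁻¹)) (G t) := by
    rw [← hu]; exact hasFDerivAt_ringInverse u
  have h := h1.comp_hasDerivAt t hG
  have hinv : (↑u⁻¹ : Matrix p p ℝ) = Ring.inverse (G t) := by
    rw [← hu, Ring.inverse_unit]
  simp [hinv] at h; exact h

theorem inv_diagonal_of_ne {m : ℕ} (v : Fin m → ℝ) (hv : ∀ k, v k ≠ 0) :
    (Matrix.diagonal v)⁻¹ = Matrix.diagonal (fun k => (v k)⁻¹) := by
  apply Matrix.inv_eq_right_inv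
  rw [Matrix.diagonal_mul_diagonal]
  convert Matrix.diagonal_one with k
  exact mul_inv_cancel₀ (hv k)

/-- For every `i ∈ [n]` and `j ∈ [d]`, the map `x ↦ σ_{i,i}(x)` is partially differentiable
in `x_j` with `∂σ_{i,i}/∂x_j = 2 σ_{*,i}ᵀ diag(A_{x,*,j}) σ_{*,i} − 2 A_{x,i,j} σ_{i,i}`. -/
theorem stmt7 {n d : ℕ} (hn : 0 < n) (hd : 0 < d)
    (A : Matrix (Fin n) (Fin d) ℝ) (b : Fin n → ℝ) (x : Fin d → ℝ)
    (hs : ∀ i, sVec A b x i ≠ 0)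
    (hrank : IsUnit ((matAx A b x)ᵀ * matAx A b x).det) (i : Fin n) (j : Fin d) :
    HasDerivAt (fun t : ℝ => sigM A b (Function.update x j t) i i)
      (2 * ((fun k => sigM A b x k i) ⬝ᵥ
          (Matrix.diagonal (fun k => matAx A b x k j)).mulVec (fun k => sigM A b x k i))
        - 2 * matAx A b x i j * sigM A b x i i)
      (x j) := by
  classical
  set s : Fin n → ℝ := sVec A b x with hs_def
  -- the perturbed residual vector
  have hsv : ∀ t : ℝ, sVec A b (Function.update x j t) =
      fun k => s k + A k j * (t - x j) := by
    intro t
    have hupd : Function.update x j t = x + (t - x j) • (Pi.single j 1 : Fin d → ℝ) := by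
      funext l
      by_cases h : l = j
      · subst h; simp [Function.update]
      · simp [Function.update, h, Pi.single_eq_of_ne h]
    funext k
    rw [sVec, hupd, Matrix.mulVec_add, Matrix.mulVec_smul, Matrix.mulVec_single_one]
    simp only [hs_def, sVec, Pi.sub_apply, Pi.add_apply, Pi.smul_apply, smul_eq_mul,
      Matrix.transpose_apply, Matrix.col_apply]
    ring
  -- the (entrywise-nice) moving matrices
  set w : ℝ → (Fin n → ℝ) := fun t k => (s k + A k j * (t - x j))⁻¹ with hw_def
  set g : ℝ → Matrix (Fin n) (Fin d) ℝ := fun t => Matrix.diagonal (w t) * A with hg_def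
  set h : ℝ → Matrix (Fin n) (Fin n) ℝ :=
    fun t => g t * Ring.inverse ((g t)ᵀ * g t) * (g t)ᵀ with hh_def
  -- value of g at the base point
  have hwx : w (x j) = fun k => (s k)⁻¹ := by
    funext k; simp [hw_def]
  have hgx : g (x j) = matAx A b x := by
    rw [hg_def]
    simp only [hwx]
    rw [matAx, ← hs_def, inv_diagonal_of_ne s hs]
  set Ax : Matrix (Fin n) (Fin d) ℝ := matAx A b x with hAx_def
  -- eventual equality with sigM ∘ update
  have hnz : ∀ᶠ t in nhds (x j), ∀ k, s k + A k j * (t - x j) ≠ 0 := by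
    rw [Filter.eventually_all]
    intro k
    have hc : ContinuousAt (fun t : ℝ => s k + A k j * (t - x j)) (x j) := by
      fun_prop
    have : (fun t : ℝ => s k + A k j * (t - x j)) (x j) ≠ 0 := by
      simpa using hs k
    exact hc.eventually_ne this
  have heq : (fun t : ℝ => sigM A b (Function.update x j t) i i) =ᶠ[nhds (x j)]
      fun t => h t i i := by
    filter_upwards [hnz] with t ht
    have hmx : matAx A b (Function.update x j t) = g t := by
      rw [matAx, hsv t, inv_diagonal_of_ne _ ht, hg_def]
    rw [sigM, hmx, Matrix.nonsing_inv_eq_ringInverse, hh_def]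
  -- derivative of w
  set w' : Fin n → ℝ := fun k => -A k j / s k ^ 2 with hw'_def
  have hw : HasDerivAt w w' (x j) := by
    rw [hasDerivAt_pi]
    intro k
    have hu : HasDerivAt (fun t : ℝ => s k + A k j * (t - x j)) (A k j) (x j) := by
      have := (((hasDerivAt_id (x j)).sub_const (x j)).const_mul (A k j)).const_add (s k)
      simpa using this
    have := hu.inv (by simpa using hs k)
    simp [hw'_def] at this; exact this
  -- derivative of g
  set g' : Matrix (Fin n) (Fin d) ℝ := Matrix.diagonal w' * A with hg'_def
  have hg : HasDerivAt g g' (x j) := by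
    have := hw.matdiag.matmul (hasDerivAt_const (x j) A)
    simpa [hg_def, hg'_def] using this
  have hgT : HasDerivAt (fun t => (g t)ᵀ) g'ᵀ (x j) := hg.mattrans
  -- derivative of the Gram matrix
  set G : ℝ → Matrix (Fin d) (Fin d) ℝ := fun t => (g t)ᵀ * g t with hG_def
  set G' : Matrix (Fin d) (Fin d) ℝ := g'ᵀ * g (x j) + (g (x j))ᵀ * g' with hG'_def
  have hG : HasDerivAt G G' (x j) := hgT.matmul hg
  have hGx : G (x j) = Axᵀ * Ax := by simp only [hG_def]; rw [hgx]
  have hGu : IsUnit (G (x j)) := by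
    rw [hGx]
    exact (Matrix.isUnit_iff_isUnit_det _).2 hrank
  set N₀ : Matrix (Fin d) (Fin d) ℝ := Ring.inverse (Axᵀ * Ax) with hN₀_def
  have hNx : Ring.inverse (G (x j)) = N₀ := by rw [hGx]
  set N' : Matrix (Fin d) (Fin d) ℝ := -(N₀ * G' * N₀) with hN'_def
  have hN : HasDerivAt (fun t => Ring.inverse (G t)) N' (x j) := by
    have := hG.matRingInverse hGu
    rwa [hNx] at this
  -- derivative of h
  have hgN : HasDerivAt (fun t => g t * Ring.inverse (G t)) (g' * N₀ + g (x j) * N') (x j) := by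
    have := hg.matmul hN
    rwa [hNx] at this
  set H' : Matrix (Fin n) (Fin n) ℝ :=
    (g' * N₀ + g (x j) * N') * (g (x j))ᵀ + g (x j) * Ring.inverse (G (x j)) * g'ᵀ with hH'_def
  have hh : HasDerivAt h H' (x j) := by
    have := hgN.matmul hgT
    simpa [hh_def, hH'_def, hG_def] using this
  have hmain : HasDerivAt (fun t => h t i i) (H' i i) (x j) := hh.matentry i i
  refine (hmain.congr_of_eventuallyEq heq).congr_deriv ?_
  -- now the algebra: compute H' i i
  set D : Matrix (Fin n) (Fin n) ℝ := Matrix.diagonal (fun k => Ax k j) with hD_def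
  set σ : Matrix (Fin n) (Fin n) ℝ := Ax * N₀ * Axᵀ with hσ_def
  have hσ_eq : sigM A b x = σ := by
    rw [sigM, Matrix.nonsing_inv_eq_ringInverse]
  have hg'_eq : g' = -(D * Ax) := by
    rw [hg'_def, hD_def]
    have hAxe : Ax = Matrix.diagonal (fun k => (s k)⁻¹) * A := by
      rw [← hgx]; simp only [hg_def, hwx]
    rw [hAxe]
    ext k l
    simp only [Matrix.diagonal_mul, Matrix.neg_apply, hw'_def]
    ring
  have hDT : Dᵀ = D := Matrix.diagonal_transpose _
  -- matrix-level identity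
  have hkey : H' = -(D * σ) + (σ * D * σ + σ * D * σ) - σ * D := by
    rw [hH'_def, hN'_def, hG'_def, hg'_eq, hgx, hNx, hσ_def]
    simp only [Matrix.transpose_neg, Matrix.transpose_mul, hDT]
    simp only [Matrix.neg_mul, Matrix.mul_neg, neg_neg, Matrix.add_mul, Matrix.mul_add,
      neg_add, Matrix.mul_assoc]
    abel
  rw [hkey, hσ_eq]
  have hσT : σᵀ = σ := by
    have hN₀T : N₀ᵀ = N₀ := by
      rw [hN₀_def, ← Matrix.nonsing_inv_eq_ringInverse, Matrix.transpose_nonsing_inv,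
        Matrix.transpose_mul, Matrix.transpose_transpose]
    rw [hσ_def, Matrix.transpose_mul, Matrix.transpose_mul, Matrix.transpose_transpose,
      hN₀T, Matrix.mul_assoc]
  have hsym : ∀ k, σ i k = σ k i := by
    intro k
    conv_lhs => rw [← hσT]
    rfl
  -- entrywise computation
  have hmid : (σ * D * σ) i i = ∑ k, σ k i * (Ax k j * σ k i) := by
    rw [Matrix.mul_apply]
    refine Finset.sum_congr rfl fun k _ => ?_
    rw [hD_def, Matrix.mul_diagonal, hsym k]
    ring
  simp only [Matrix.sub_apply, Matrix.add_apply, Matrix.neg_apply]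
  rw [hmid, hD_def, Matrix.diagonal_mul, Matrix.mul_diagonal]
  simp only [dotProduct, Matrix.mulVec_diagonal]
  ring
  done

end Aux
end

section
/- The loss L_b is differentiable at x and its gradient is ∇L_b(x) = 2 A_xᵀ (σ^{∘2}_{*,*}(x) − Σ(x)) (f(x) − b) ∈ ℝ^d. -/
open Matrix

/-- `f(x)_i := σ_{i,i}(x)`. -/
noncomputable def fVec {n d : ℕ} (A : Matrix (Fin n) (Fin d) ℝ) (b : Fin n → ℝ)
    (x : Fin d → ℝ) : Fin n → ℝ := fun i => sigM A b x i i

/-- `L_b(x) := 0.5 ‖f(x) − b‖₂²`. -/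
noncomputable def Lb {n d : ℕ} (A : Matrix (Fin n) (Fin d) ℝ) (b : Fin n → ℝ)
    (x : Fin d → ℝ) : ℝ := 0.5 * ∑ i, (fVec A b x i - b i) ^ 2

attribute [local instance] Matrix.linftyOpNormedAddCommGroup Matrix.linftyOpNormedSpace
  Matrix.linftyOpNormedRing Matrix.linftyOpNormedAlgebra
attribute [-instance] instTopologicalSpaceMatrix Matrix.instUniformSpace

section helpers
variable {E : Type*} [NormedAddCommGroup E] [NormedSpace ℝ E] [FiniteDimensional ℝ E]

noncomputable def mkCLM {F : Type*} [NormedAddCommGroup F] [NormedSpace ℝ F]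
    (φ : E → F) (h : IsLinearMap ℝ φ) : E →L[ℝ] F :=
  LinearMap.toContinuousLinearMap (IsLinearMap.mk' φ h)

@[simp] lemma mkCLM_apply {F : Type*} [NormedAddCommGroup F] [NormedSpace ℝ F]
    (φ : E → F) (h : IsLinearMap ℝ φ) (v : E) : mkCLM φ h v = φ v := rfl

variable {α β γ : Type*} [Fintype α] [Fintype β] [Fintype γ] [DecidableEq α] [DecidableEq β]

noncomputable def lmulCLM (P : Matrix α β ℝ) : Matrix β γ ℝ →L[ℝ] Matrix α γ ℝ :=
  mkCLM (fun Q => P * Q) ⟨fun _ _ => Matrix.mul_add _ _ _, fun _ _ => Matrix.mul_smul _ _ _⟩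

noncomputable def rmulCLM (Q : Matrix β γ ℝ) : Matrix α β ℝ →L[ℝ] Matrix α γ ℝ :=
  mkCLM (fun P => P * Q) ⟨fun _ _ => Matrix.add_mul _ _ _, fun _ _ => Matrix.smul_mul _ _ _⟩

@[simp] lemma lmulCLM_apply (P : Matrix α β ℝ) (Q : Matrix β γ ℝ) : lmulCLM P Q = P * Q := rfl
@[simp] lemma rmulCLM_apply (Q : Matrix β γ ℝ) (P : Matrix α β ℝ) : rmulCLM Q P = P * Q := rfl

noncomputable def mvCLM (C : Matrix α β ℝ) : (β → ℝ) →L[ℝ] (α → ℝ) :=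
  mkCLM (fun v => C.mulVec v) ⟨fun u v => C.mulVec_add u v, fun c v => C.mulVec_smul c v⟩

@[simp] lemma mvCLM_apply (C : Matrix α β ℝ) (v : β → ℝ) : mvCLM C v = C.mulVec v := rfl

noncomputable def dgCLM : (α → ℝ) →L[ℝ] Matrix α α ℝ :=
  mkCLM (fun w => Matrix.diagonal w)
    ⟨fun u v => by ext i j; by_cases h : i = j <;> simp [Matrix.diagonal_apply, h],
     fun c v => by ext i j; by_cases h : i = j <;> simp [Matrix.diagonal_apply, h]⟩

@[simp] lemma dgCLM_apply (w : α → ℝ) : (dgCLM w : Matrix α α ℝ) = Matrix.diagonal w := rfl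

noncomputable def tCLM : Matrix α β ℝ →L[ℝ] Matrix β α ℝ :=
  mkCLM (fun P => Pᵀ) ⟨fun u v => Matrix.transpose_add u v, fun c v => Matrix.transpose_smul c v⟩

@[simp] lemma tCLM_apply (P : Matrix α β ℝ) : (tCLM P : Matrix β α ℝ) = Pᵀ := rfl

noncomputable def dotCLM (c : α → ℝ) : (α → ℝ) →L[ℝ] ℝ :=
  mkCLM (fun v => c ⬝ᵥ v)
    ⟨fun u v => by simp [dotProduct, mul_add, Finset.sum_add_distrib],
     fun r v => by simp [dotProduct, Finset.mul_sum, mul_comm, mul_assoc, mul_left_comm]⟩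

@[simp] lemma dotCLM_apply (c v : α → ℝ) : dotCLM c v = c ⬝ᵥ v := rfl

omit [FiniteDimensional ℝ E] in
theorem HasFDerivAt.congr_deriv {F : Type*} [NormedAddCommGroup F] [NormedSpace ℝ F]
    {f : E → F} {Φ Ψ : E →L[ℝ] F} {x : E} (h : HasFDerivAt f Φ x) (e : Φ = Ψ) :
    HasFDerivAt f Ψ x := e ▸ h

theorem hasFDerivAt_matmul {f : E → Matrix α β ℝ} {g : E → Matrix β γ ℝ}
    {f' : E →L[ℝ] Matrix α β ℝ} {g' : E →L[ℝ] Matrix β γ ℝ} {x : E}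
    (hf : HasFDerivAt f f' x) (hg : HasFDerivAt g g' x) :
    HasFDerivAt (fun y => f y * g y) ((rmulCLM (g x)).comp f' + (lmulCLM (f x)).comp g') x := by
  have hbil : IsBoundedBilinearMap ℝ (fun p : Matrix α β ℝ × Matrix β γ ℝ => p.1 * p.2) := by
    exact
      { add_left := fun _ _ _ => Matrix.add_mul _ _ _
        smul_left := fun _ _ _ => Matrix.smul_mul _ _ _
        add_right := fun _ _ _ => Matrix.mul_add _ _ _
        smul_right := fun _ _ _ => Matrix.mul_smul _ _ _
        bound := ⟨1, one_pos, fun a b => by simpa using Matrix.linfty_opNorm_mul a b⟩ }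
  have h := (hbil.hasFDerivAt (f x, g x)).comp x (hf.prodMk hg)
  refine h.congr_deriv ?_
  ext v
  simp [IsBoundedBilinearMap.deriv_apply, add_comm]

end helpers

set_option maxHeartbeats 1000000 in
/-- `L_b` is differentiable at `x` and its gradient is
`∇L_b(x) = 2 A_xᵀ (σ^{∘2}_{*,*}(x) − Σ(x)) (f(x) − b)`, where `σ^{∘2}` is the Hadamard
square of the leverage-score matrix and `Σ(x) = σ_{*,*}(x) ∘ I_n` is its diagonal part.
The gradient is expressed via the Fréchet derivative: `(fderiv L_b x) v = ⟨∇L_b(x), v⟩`. -/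
theorem stmt8 {n d : ℕ} (hn : 0 < n) (hd : 0 < d)
    (A : Matrix (Fin n) (Fin d) ℝ) (b : Fin n → ℝ) (x : Fin d → ℝ)
    (hs : ∀ i, sVec A b x i ≠ 0)
    (hrank : IsUnit ((matAx A b x)ᵀ * matAx A b x).det) :
    DifferentiableAt ℝ (Lb A b) x ∧
    ∀ v : Fin d → ℝ,
      fderiv ℝ (Lb A b) x v =
        ((2 : ℝ) • ((matAx A b x)ᵀ *
            (Matrix.hadamard (sigM A b x) (sigM A b x) -
              Matrix.hadamard (sigM A b x) 1)).mulVec (fVec A b x - b)) ⬝ᵥ v := by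
  classical
  set B := matAx A b x with hBdef
  set N := ((matAx A b x)ᵀ * matAx A b x)⁻¹ with hNdef
  set σ := sigM A b x with hσdef
  set s := sVec A b x with hsdef
  -- basic invertibility facts
  have hMunit : IsUnit (Bᵀ * B) := (Matrix.isUnit_iff_isUnit_det _).mpr hrank
  have hNt : Nᵀ = N := by
    rw [hNdef, Matrix.transpose_nonsing_inv, Matrix.transpose_mul, Matrix.transpose_transpose]
  have hσBNBt : σ = B * N * Bᵀ := rfl
  have hσt : σᵀ = σ := by
    rw [hσBNBt, Matrix.transpose_mul, Matrix.transpose_mul, Matrix.transpose_transpose, hNt,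
      Matrix.mul_assoc]
  have hσe : ∀ i j, σ j i = σ i j := fun i j => by
    simpa using congrFun (congrFun hσt i) j
  -- inverse of the diagonal matrix
  have hDinv : (Matrix.diagonal s)⁻¹ = Matrix.diagonal (fun i => (s i)⁻¹) := by
    apply Matrix.inv_eq_right_inv
    rw [Matrix.diagonal_mul_diagonal]
    have : (fun i => s i * (s i)⁻¹) = fun _ => (1 : ℝ) := funext fun i => mul_inv_cancel₀ (hs i)
    rw [this, Matrix.diagonal_one]
  have hBd : B = Matrix.diagonal (fun i => (s i)⁻¹) * A := by
    rw [hBdef, matAx, ← hsdef, hDinv]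
  have hsu : IsUnit (Matrix.diagonal s) := by
    rw [Matrix.isUnit_iff_isUnit_det, Matrix.det_diagonal]
    exact isUnit_iff_ne_zero.mpr (Finset.prod_ne_zero_iff.mpr fun i _ => hs i)
  -- derivative of y ↦ sVec A b y
  have hs' : HasFDerivAt (fun y => sVec A b y) (mvCLM A) x := by
    have := (mvCLM A).hasFDerivAt (x := x)
    simpa [sVec] using this.sub_const b
  -- derivative of y ↦ diagonal (sVec A b y)
  have hdiagF : HasFDerivAt (fun y => Matrix.diagonal (sVec A b y))
      ((dgCLM (α := Fin n)).comp (mvCLM A)) x :=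
    (dgCLM (α := Fin n)).hasFDerivAt.comp x hs'
  -- derivative of y ↦ matAx A b y
  have hB' : HasFDerivAt (fun y => matAx A b y)
      (-((rmulCLM B).comp (dgCLM.comp (mvCLM B)))) x := by
    have hinv : HasFDerivAt Ring.inverse
        (-(ContinuousLinearMap.mulLeftRight ℝ _ (↑hsu.unit⁻¹) (↑hsu.unit⁻¹)))
        (Matrix.diagonal (sVec A b x)) := by
      have := hasFDerivAt_ringInverse (𝕜 := ℝ) hsu.unit
      rwa [hsu.unit_spec] at this
    have hG : HasFDerivAt (fun y => Ring.inverse (Matrix.diagonal (sVec A b y)))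
        ((-(ContinuousLinearMap.mulLeftRight ℝ _ (↑hsu.unit⁻¹) (↑hsu.unit⁻¹))).comp
          (dgCLM.comp (mvCLM A))) x := by convert hinv.comp x hdiagF using 1 <;> rfl
    have hraw := (rmulCLM (γ := Fin d) A).hasFDerivAt.comp x hG
    have hfun : HasFDerivAt (fun y => matAx A b y)
        ((rmulCLM A).comp ((-(ContinuousLinearMap.mulLeftRight ℝ _
            (↑hsu.unit⁻¹) (↑hsu.unit⁻¹))).comp (dgCLM.comp (mvCLM A)))) x := by
      have heq : (fun y => rmulCLM (α := Fin n) A (Ring.inverse (Matrix.diagonal (sVec A b y)))) =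
          fun y => matAx A b y := by
        funext y
        simp [matAx, Matrix.nonsing_inv_eq_ringInverse]
      exact heq ▸ hraw
    refine hfun.congr_deriv ?_
    have hui : (↑hsu.unit⁻¹ : Matrix (Fin n) (Fin n) ℝ) = Matrix.diagonal (fun i => (s i)⁻¹) := by
      rw [Matrix.coe_units_inv, hsu.unit_spec, hDinv]
    ext v i j
    simp only [ContinuousLinearMap.comp_apply, ContinuousLinearMap.neg_apply,
      ContinuousLinearMap.mulLeftRight_apply, mkCLM_apply, rmulCLM_apply, mvCLM_apply,
      dgCLM_apply, hui, Matrix.neg_apply, Matrix.neg_mul]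
    rw [hBd]
    simp only [← Matrix.mulVec_mulVec, Matrix.diagonal_mul_diagonal, Matrix.diagonal_mul,
      Matrix.mulVec_diagonal]
    ring
  -- derivative of y ↦ (matAx A b y)ᵀ
  have hBt : HasFDerivAt (fun y => (matAx A b y)ᵀ)
      ((tCLM (α := Fin n) (β := Fin d)).comp (-((rmulCLM B).comp (dgCLM.comp (mvCLM B))))) x :=
    (tCLM (α := Fin n) (β := Fin d)).hasFDerivAt.comp x hB'
  -- derivative of y ↦ (matAx A b y)ᵀ * matAx A b y
  have hM' := hasFDerivAt_matmul hBt hB'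
  -- derivative of y ↦ ((matAx A b y)ᵀ * matAx A b y)⁻¹
  have hNu : (↑hMunit.unit⁻¹ : Matrix (Fin d) (Fin d) ℝ) = N := by
    rw [Matrix.coe_units_inv, hMunit.unit_spec, hNdef, hBdef]
  have hinv2 : HasFDerivAt Ring.inverse
      (-(ContinuousLinearMap.mulLeftRight ℝ _ (↑hMunit.unit⁻¹) (↑hMunit.unit⁻¹)))
      ((matAx A b x)ᵀ * matAx A b x) := by
    have := hasFDerivAt_ringInverse (𝕜 := ℝ) hMunit.unit
    rwa [hMunit.unit_spec] at this
  have hN' : HasFDerivAt (fun y => ((matAx A b y)ᵀ * matAx A b y)⁻¹)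
      ((-(ContinuousLinearMap.mulLeftRight ℝ _ (↑hMunit.unit⁻¹) (↑hMunit.unit⁻¹))).comp
        ((rmulCLM B).comp (tCLM.comp (-((rmulCLM B).comp (dgCLM.comp (mvCLM B))))) +
          (lmulCLM Bᵀ).comp (-((rmulCLM B).comp (dgCLM.comp (mvCLM B)))))) x := by
    have h := hinv2.comp x hM'
    have heq : (fun y => Ring.inverse ((matAx A b y)ᵀ * matAx A b y)) =
        fun y => ((matAx A b y)ᵀ * matAx A b y)⁻¹ := by
      funext y; rw [Matrix.nonsing_inv_eq_ringInverse]
    exact heq ▸ h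
  -- derivative of y ↦ sigM A b y
  have hσ'raw := hasFDerivAt_matmul (hasFDerivAt_matmul hB' hN') hBt
  have hσ' : HasFDerivAt (fun y => sigM A b y)
      (-((rmulCLM σ).comp (dgCLM.comp (mvCLM B))) - (lmulCLM σ).comp (dgCLM.comp (mvCLM B)) +
        (2:ℝ) • ((lmulCLM σ).comp ((rmulCLM σ).comp (dgCLM.comp (mvCLM B))))) x := by
    refine HasFDerivAt.congr_deriv (f := fun y => sigM A b y) hσ'raw ?_
    ext v : 1
    simp only [ContinuousLinearMap.comp_apply, ContinuousLinearMap.add_apply,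
      ContinuousLinearMap.neg_apply, ContinuousLinearMap.smul_apply,
      ContinuousLinearMap.sub_apply, ContinuousLinearMap.mulLeftRight_apply,
      mkCLM_apply, rmulCLM_apply, lmulCLM_apply, mvCLM_apply, dgCLM_apply, tCLM_apply, hNu]
    rw [hσBNBt, ← hNdef, ← hBdef]
    simp only [Matrix.transpose_neg, Matrix.transpose_mul, Matrix.diagonal_transpose,
      Matrix.neg_mul, Matrix.mul_neg, neg_add, neg_neg, Matrix.mul_add, Matrix.add_mul,
      Matrix.mul_assoc, two_smul, smul_add]
    abel
  -- coordinate functions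
  have hfi : ∀ i : Fin n, HasFDerivAt (fun y => sigM A b y i i)
      ((mkCLM (fun P : Matrix (Fin n) (Fin n) ℝ => P i i)
          ⟨fun _ _ => rfl, fun _ _ => rfl⟩).comp
        (-((rmulCLM σ).comp (dgCLM.comp (mvCLM B))) - (lmulCLM σ).comp (dgCLM.comp (mvCLM B)) +
          (2:ℝ) • ((lmulCLM σ).comp ((rmulCLM σ).comp (dgCLM.comp (mvCLM B)))))) x :=
    fun i => (mkCLM (fun P : Matrix (Fin n) (Fin n) ℝ => P i i)
      ⟨fun _ _ => rfl, fun _ _ => rfl⟩).hasFDerivAt.comp x hσ'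
  have hL : HasFDerivAt (Lb A b)
      ((0.5 : ℝ) • ∑ i, ((σ i i - b i) •
          ((mkCLM (fun P : Matrix (Fin n) (Fin n) ℝ => P i i)
              ⟨fun _ _ => rfl, fun _ _ => rfl⟩).comp
            (-((rmulCLM σ).comp (dgCLM.comp (mvCLM B))) -
              (lmulCLM σ).comp (dgCLM.comp (mvCLM B)) +
              (2:ℝ) • ((lmulCLM σ).comp ((rmulCLM σ).comp (dgCLM.comp (mvCLM B)))))) +
        (σ i i - b i) •
          ((mkCLM (fun P : Matrix (Fin n) (Fin n) ℝ => P i i)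
              ⟨fun _ _ => rfl, fun _ _ => rfl⟩).comp
            (-((rmulCLM σ).comp (dgCLM.comp (mvCLM B))) -
              (lmulCLM σ).comp (dgCLM.comp (mvCLM B)) +
              (2:ℝ) • ((lmulCLM σ).comp ((rmulCLM σ).comp (dgCLM.comp (mvCLM B)))))))) x := by
    have hgi : ∀ i : Fin n, HasFDerivAt (fun y => (sigM A b y i i - b i) * (sigM A b y i i - b i))
        ((σ i i - b i) •
            ((mkCLM (fun P : Matrix (Fin n) (Fin n) ℝ => P i i)
                ⟨fun _ _ => rfl, fun _ _ => rfl⟩).comp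
              (-((rmulCLM σ).comp (dgCLM.comp (mvCLM B))) -
                (lmulCLM σ).comp (dgCLM.comp (mvCLM B)) +
                (2:ℝ) • ((lmulCLM σ).comp ((rmulCLM σ).comp (dgCLM.comp (mvCLM B)))))) +
          (σ i i - b i) •
            ((mkCLM (fun P : Matrix (Fin n) (Fin n) ℝ => P i i)
                ⟨fun _ _ => rfl, fun _ _ => rfl⟩).comp
              (-((rmulCLM σ).comp (dgCLM.comp (mvCLM B))) -
                (lmulCLM σ).comp (dgCLM.comp (mvCLM B)) +
                (2:ℝ) • ((lmulCLM σ).comp ((rmulCLM σ).comp (dgCLM.comp (mvCLM B))))))) x :=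
      fun i => ((hfi i).sub_const (b i)).mul ((hfi i).sub_const (b i))
    have hsum := HasFDerivAt.fun_sum (u := Finset.univ) (fun i _ => hgi i)
    have hLf := hsum.const_mul (0.5 : ℝ)
    have hLeq : Lb A b = fun y =>
        (0.5 : ℝ) * ∑ i, (sigM A b y i i - b i) * (sigM A b y i i - b i) := by
      funext y
      simp [Lb, fVec, pow_two]
    rw [hLeq]
    exact hLf
  refine ⟨hL.differentiableAt, fun v => ?_⟩
  rw [hL.fderiv]
  simp only [ContinuousLinearMap.smul_apply, ContinuousLinearMap.sum_apply,
    ContinuousLinearMap.add_apply, ContinuousLinearMap.comp_apply,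
    ContinuousLinearMap.sub_apply, ContinuousLinearMap.neg_apply, mkCLM_apply, rmulCLM_apply,
    lmulCLM_apply, mvCLM_apply, dgCLM_apply, smul_eq_mul]
  set dv := B *ᵥ v with hdv
  have key : ∀ i : Fin n,
      (-(Matrix.diagonal dv * σ) - σ * Matrix.diagonal dv
        + (2:ℝ) • (σ * (Matrix.diagonal dv * σ))) i i
      = 2 * ∑ j, (σ j i * σ j i - σ j i * (1 : Matrix (Fin n) (Fin n) ℝ) j i) * dv j := by
    intro i
    have h1 : (σ * (Matrix.diagonal dv * σ)) i i = ∑ j, σ i j * (dv j * σ j i) := by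
      rw [← Matrix.mul_assoc, Matrix.mul_apply]
      exact Finset.sum_congr rfl fun j _ => by rw [Matrix.mul_diagonal]; ring
    simp only [Matrix.sub_apply, Matrix.add_apply, Matrix.neg_apply, Matrix.smul_apply,
      Matrix.diagonal_mul, Matrix.mul_diagonal, smul_eq_mul, h1, Matrix.one_apply]
    have h2 : ∑ j, σ i j * (dv j * σ j i) = ∑ j, σ j i * σ j i * dv j :=
      Finset.sum_congr rfl fun j _ => by rw [← hσe i j]; ring
    have h3 : ∑ j, (σ j i * σ j i - σ j i * (if j = i then (1:ℝ) else 0)) * dv j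
        = ∑ j, σ j i * σ j i * dv j - σ i i * dv i := by
      have hterm : ∀ j ∈ Finset.univ,
          (σ j i * σ j i - σ j i * (if j = i then (1:ℝ) else 0)) * dv j
          = σ j i * σ j i * dv j - (if j = i then σ i i * dv i else 0) := by
        intro j _
        by_cases h : j = i
        · subst h; rw [if_pos rfl, if_pos rfl]; ring
        · simp [h]
      rw [Finset.sum_congr rfl hterm, Finset.sum_sub_distrib,
        Finset.sum_ite_eq' Finset.univ i (fun _ => σ i i * dv i)]
      simp
    rw [h2, h3]
    ring
  have hRHS : ((2:ℝ) • ((Bᵀ * (Matrix.hadamard σ σ - Matrix.hadamard σ 1)).mulVec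
        (fVec A b x - b))) ⬝ᵥ v
      = ∑ i, (σ i i - b i) *
          (2 * ∑ j, (σ j i * σ j i - σ j i * (1 : Matrix (Fin n) (Fin n) ℝ) j i) * dv j) := by
    have hPt : (Matrix.hadamard σ σ - Matrix.hadamard σ 1)ᵀ
        = Matrix.hadamard σ σ - Matrix.hadamard σ 1 := by
      ext i j
      simp only [Matrix.transpose_apply, Matrix.sub_apply, Matrix.hadamard_apply,
        Matrix.one_apply]
      rw [hσe j i]
      simp [eq_comm]
    rw [smul_dotProduct, dotProduct_comm, Matrix.dotProduct_mulVec,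
      ← Matrix.mulVec_transpose, Matrix.transpose_mul, Matrix.transpose_transpose, hPt,
      ← Matrix.mulVec_mulVec, ← hdv]
    simp only [dotProduct, Matrix.mulVec, Pi.sub_apply, fVec, ← hσdef, smul_eq_mul,
      Finset.mul_sum]
    refine Finset.sum_congr rfl fun i _ => ?_
    have hq : ∀ j, ((Matrix.hadamard σ σ - Matrix.hadamard σ 1) i j) * dv j
        = (σ j i * σ j i - σ j i * (1 : Matrix (Fin n) (Fin n) ℝ) j i) * dv j := by
      intro j
      simp only [Matrix.sub_apply, Matrix.hadamard_apply, Matrix.one_apply]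
      rw [hσe j i]
      simp [eq_comm]
    rw [Finset.sum_congr rfl fun j _ => hq j, Finset.sum_mul, Finset.mul_sum]
    exact Finset.sum_congr rfl fun j _ => by ring
  rw [hRHS, Finset.mul_sum]
  refine Finset.sum_congr rfl fun i _ => ?_
  rw [key i]
  ring
end
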